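/- Let z₁,…,zₙ be real numbers with z_t > 0 for every t, and let μ > 0. Define W = Diag(0, z₁, …, zₙ) + μQ. Then W is invertible and every entry of W⁻¹ is nonnegative: [W⁻¹]_{ij} ≥ 0 for all i, j ∈ {0,…,n}. -/

import Mathlib

/-!
`W` has nonpositive off-diagonal entries and positive row sums: `μ / k₀` in row `0` and `z t` in
row `t ≥ 1`, since the rows of `Q` other than the first sum to zero. Such a matrix obeys a discrete
minimum principle: if `A *ᵥ x ≥ 0` and `x` attains its minimum at `m`, then
`(A *ᵥ x) m ≤ x m * ∑ j, A m j`, forcing `x m ≥ 0`. Applied to `x - y` and `y - x` this makes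
`A *ᵥ ·` injective, and applied to the columns `A⁻¹ *ᵥ Pi.single j 1` it makes `A⁻¹` nonnegative.
-/

open Matrix

/-- The GMRF random-walk precision matrix `Q` of size `(n+1) × (n+1)`. -/
noncomputable def Qmat (n : ℕ) (k₀ : ℝ) : Matrix (Fin (n+1)) (Fin (n+1)) ℝ :=
  fun i j =>
    if i = j then
      if (i : ℕ) = 0 then 1 + 1 / k₀
      else if (i : ℕ) = n then 1
      else 2
    else if (i : ℕ) + 1 = (j : ℕ) ∨ (j : ℕ) + 1 = (i : ℕ) then -1
    else 0

namespace Matrix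

variable {ι R : Type*} [Fintype ι] [Field R] [LinearOrder R] [IsStrictOrderedRing R]
  {A : Matrix ι ι R}

theorem nonneg_of_mulVec_nonneg (hoff : ∀ i j, i ≠ j → A i j ≤ 0) (hrow : ∀ i, 0 < ∑ j, A i j)
    {x : ι → R} (hx : 0 ≤ A *ᵥ x) : 0 ≤ x := by
  intro i
  have : Nonempty ι := ⟨i⟩
  obtain ⟨m, hm⟩ := Finite.exists_min x
  refine le_trans ?_ (hm i)
  by_contra! hneg
  have hle : (A *ᵥ x) m ≤ x m * ∑ j, A m j := by
    rw [mulVec, dotProduct, Finset.mul_sum]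
    refine Finset.sum_le_sum fun j _ => ?_
    rcases eq_or_ne m j with rfl | hj
    · rw [mul_comm]
    · rw [mul_comm (x m)]
      exact mul_le_mul_of_nonpos_left (hm j) (hoff m j hj)
  exact (hle.trans_lt (mul_neg_of_neg_of_pos hneg (hrow m))).not_ge (hx m)

variable [DecidableEq ι]

theorem isUnit_of_offDiag_nonpos_of_rowSum_pos (hoff : ∀ i j, i ≠ j → A i j ≤ 0)
    (hrow : ∀ i, 0 < ∑ j, A i j) : IsUnit A := by
  refine mulVec_injective_iff_isUnit.mp fun x y hxy => ?_
  have hsub : A *ᵥ (x - y) = 0 := by rw [mulVec_sub, hxy, sub_self]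
  have h₁ := nonneg_of_mulVec_nonneg hoff hrow hsub.ge
  have h₂ := nonneg_of_mulVec_nonneg hoff hrow (x := y - x)
    (by rw [← neg_sub, mulVec_neg, hsub, neg_zero])
  exact le_antisymm (sub_nonneg.mp h₂) (sub_nonneg.mp h₁)

theorem inv_nonneg_of_offDiag_nonpos_of_rowSum_pos (hoff : ∀ i j, i ≠ j → A i j ≤ 0)
    (hrow : ∀ i, 0 < ∑ j, A i j) (i j : ι) : 0 ≤ A⁻¹ i j := by
  have hA := isUnit_of_offDiag_nonpos_of_rowSum_pos hoff hrow
  have hcol : A *ᵥ (A⁻¹ *ᵥ Pi.single j 1) = Pi.single j 1 := by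
    rw [mulVec_mulVec, mul_nonsing_inv A ((isUnit_iff_isUnit_det A).mp hA), one_mulVec]
  have hcol_nonneg := nonneg_of_mulVec_nonneg hoff hrow (x := A⁻¹ *ᵥ Pi.single j 1)
    (by rw [hcol]; exact Pi.single_nonneg.mpr zero_le_one)
  simpa [mulVec_single_one] using hcol_nonneg i

end Matrix

section Qmat

variable (n : ℕ) (k₀ : ℝ)

theorem Qmat_apply_eq (i j : Fin (n+1)) : Qmat n k₀ i j =
    (if i = j then (if (i : ℕ) = 0 then 1 + 1 / k₀ else if (i : ℕ) = n then 1 else 2) else 0)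
      - (if (i : ℕ) + 1 = j then 1 else 0) - (if (j : ℕ) + 1 = i then 1 else 0) := by
  unfold Qmat
  split_ifs <;> (try subst_vars) <;> first | (exfalso; omega) | norm_num

theorem Qmat_apply_nonpos_of_ne {i j : Fin (n+1)} (h : i ≠ j) : Qmat n k₀ i j ≤ 0 := by
  rw [Qmat_apply_eq, if_neg h]
  split_ifs <;> norm_num

private theorem sum_ite_succ_eq (i : Fin (n+1)) :
    ∑ j : Fin (n+1), (if (i : ℕ) + 1 = j then (1 : ℝ) else 0) = if (i : ℕ) < n then 1 else 0 := by
  rw [Fin.sum_univ_eq_sum_range (fun j => if (i : ℕ) + 1 = j then (1 : ℝ) else 0),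
    Finset.sum_ite_eq]
  simp

private theorem sum_ite_pred_eq (i : Fin (n+1)) :
    ∑ j : Fin (n+1), (if (j : ℕ) + 1 = i then (1 : ℝ) else 0) = if (i : ℕ) = 0 then 0 else 1 := by
  rw [Fin.sum_univ_eq_sum_range (fun j => if j + 1 = (i : ℕ) then (1 : ℝ) else 0)]
  rcases i with ⟨_ | p, hp⟩
  · simp
  · simp only [Nat.add_right_cancel_iff, Finset.sum_ite_eq', Finset.mem_range,
      if_pos (show p < n + 1 by omega), if_neg p.succ_ne_zero]

theorem sum_Qmat_row (hn : 1 ≤ n) (i : Fin (n+1)) :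
    ∑ j, Qmat n k₀ i j = if (i : ℕ) = 0 then 1 / k₀ else 0 := by
  simp only [Qmat_apply_eq, Finset.sum_sub_distrib, Finset.sum_ite_eq, Finset.mem_univ, if_true,
    sum_ite_succ_eq, sum_ite_pred_eq]
  split_ifs <;> first | (exfalso; omega) | ring

end Qmat

/-- Lemma A.2: `W = Diag(0, z₁, …, zₙ) + μQ` is invertible and `W⁻¹` is an
entrywise nonnegative matrix. -/
theorem stmt7 (n : ℕ) (hn : 1 ≤ n) (k₀ : ℝ) (hk : 0 < k₀) (μ : ℝ) (hμ : 0 < μ)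
    (z : Fin (n+1) → ℝ) (hz0 : z 0 = 0) (hz : ∀ t : Fin (n+1), t ≠ 0 → 0 < z t)
    (W : Matrix (Fin (n+1)) (Fin (n+1)) ℝ)
    (hW : W = Matrix.diagonal z + μ • Qmat n k₀) :
    IsUnit W ∧ ∀ i j, 0 ≤ W⁻¹ i j := by
  have hoff : ∀ i j, i ≠ j → W i j ≤ 0 := fun i j hij => by
    simpa [hW, diagonal_apply_ne _ hij] using
      mul_nonpos_of_nonneg_of_nonpos hμ.le (Qmat_apply_nonpos_of_ne n k₀ hij)
  have hrow : ∀ i, 0 < ∑ j, W i j := fun i => by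
    have hsum : ∑ j, W i j = z i + μ * ∑ j, Qmat n k₀ i j := by
      simp [hW, Finset.sum_add_distrib, diagonal_apply, Finset.mul_sum]
    rw [hsum, sum_Qmat_row n k₀ hn]
    by_cases hi : i = 0
    · rw [hi, if_pos (Fin.val_zero (n+1)), hz0, zero_add]
      positivity
    · simpa [hi, Fin.ext_iff] using hz i hi
  exact ⟨isUnit_of_offDiag_nonpos_of_rowSum_pos hoff hrow,
    inv_nonneg_of_offDiag_nonpos_of_rowSum_pos hoff hrow⟩
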